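/- arXiv:cs/0610064 — 3 statements merged into one kernel-verified Lean document; each statement's English description precedes it below -/
import Mathlib

section
/- Let a and b be binary relations on a set such that both a and b are well-founded (i.e., admit no infinite sequences of steps) and the composition a;b is contained in b*;a (where b* is the reflexive-transitive closure of b). Then the union a ∪ b is well-founded. -/
/-!
Call `x` *terminating* if no infinite `(a ∪ b)`-sequence starts at `x`. It suffices to show that
`x` terminates as soon as all its `b`-successors do: then every point terminates by induction
along `b`. That claim is proved by induction on `x` along `a`. For an `a`-successor `y` of `x`,
induction along `b` on `y` reduces it to showing that each `b`-successor `u` of `y` terminates.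
The commutation hypothesis rewrites `x →a y →b u` as `x →b* w →a u`: if the `b`-part is
empty then `u` is again an `a`-successor of `x`, and otherwise `u` is reachable from a
`b`-successor of `x`, which terminates by assumption.
-/

/-- A relation is well-founded in the rewriting sense if it admits no infinite
sequence of steps `x₀ r x₁ r x₂ r ⋯`. -/
def NoInfSeq {α : Type*} (r : α → α → Prop) : Prop :=
  ¬ ∃ f : ℕ → α, ∀ n, r (f n) (f (n + 1))

theorem noInfSeq_iff_wellFounded_flip {α : Type*} {r : α → α → Prop} :
    NoInfSeq r ↔ WellFounded (flip r) := by
  rw [wellFounded_iff_isEmpty_descending_chain, isEmpty_subtype, NoInfSeq, not_exists]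
  rfl

theorem Acc.of_reflTransGen_flip {α : Type*} {r : α → α → Prop} {x y : α}
    (hx : Acc (flip r) x) (hxy : Relation.ReflTransGen r x y) : Acc (flip r) y := by
  induction hxy with
  | refl => exact hx
  | tail _ hyz ih => exact ih.inv hyz

section Commutation

variable {α : Type*} {a b : α → α → Prop}
  (ha : WellFounded (flip a)) (hb : WellFounded (flip b))
  (hcomp : ∀ x y z, a x y → b y z → ∃ w, Relation.ReflTransGen b x w ∧ a w z)
include ha hb hcomp

theorem acc_flip_or_of_forall_acc_flip_or {x : α}
    (hx : ∀ u, b x u → Acc (flip fun x y => a x y ∨ b x y) u) :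
    Acc (flip fun x y => a x y ∨ b x y) x := by
  induction x using ha.induction with
  | _ x ihA =>
  have hsucc : ∀ y, a x y → Acc (flip fun x y => a x y ∨ b x y) y := by
    intro y
    induction y using hb.induction with
    | _ y ihB =>
    refine fun hxy => ihA y hxy fun u hyu => ?_
    obtain ⟨w, hxw, hwu⟩ := hcomp x y u hxy hyu
    rcases hxw.cases_head with rfl | ⟨v, hxv, hvw⟩
    · exact ihB u hyu hwu
    · exact (hx v hxv).of_reflTransGen_flip
        ((Relation.ReflTransGen.mono (fun _ _ => Or.inr) _ _ hvw).tail (Or.inl hwu))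
  exact .intro x fun y hy => Or.elim hy (hsucc y) (hx y)

theorem wellFounded_flip_or_of_comp_subset :
    WellFounded (flip fun x y => a x y ∨ b x y) :=
  ⟨fun x => hb.induction x fun _ ih => acc_flip_or_of_forall_acc_flip_or ha hb hcomp ih⟩

end Commutation

/-- If `a` and `b` are well-founded and `a;b ⊆ b*;a`, then `a ∪ b` is well-founded. -/
theorem union_wellFounded_of_comp_subset {α : Type*} (a b : α → α → Prop)
    (ha : NoInfSeq a) (hb : NoInfSeq b)
    (hcomp : ∀ x y z, a x y → b y z → ∃ w, Relation.ReflTransGen b x w ∧ a w z) :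
    NoInfSeq (fun x y => a x y ∨ b x y) := by
  rw [noInfSeq_iff_wellFounded_flip] at ha hb ⊢
  exact wellFounded_flip_or_of_comp_subset ha hb hcomp
end

section
/- The covered-subterm relation û⊴ is stable by valuation: if u ▷̂ v (u is a strict covered-superterm of v, i.e., v û⊴ u) and σ is an IDTS-valuation, then uσ ▷̂ vσ. -/
set_option linter.unusedVariables false

/-- IDTS metaterms: variables, abstraction, function symbols (fixed arity via list),
and metavariables applied to arguments. -/
inductive Tm : Type where
  | var  : ℕ → Tm
  | lam  : ℕ → Tm → Tm
  | fn   : ℕ → List Tm → Tm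
  | mvar : ℕ → List Tm → Tm

namespace Tm

/-- Free variables. -/
def fv : Tm → Set ℕ
  | var x => {x}
  | lam x u => fv u \ {x}
  | fn _ us => us.attach.foldr (fun ⟨u, hu⟩ s => fv u ∪ s) ∅
  | mvar _ us => us.attach.foldr (fun ⟨u, hu⟩ s => fv u ∪ s) ∅
decreasing_by
  all_goals try have := List.sizeOf_lt_of_mem hu
  all_goals simp
  all_goals omega

/-- Substitution of terms for free variables (the paper works modulo α-conversion,
assuming bound variables distinct from free variables of the codomain). -/
def subst (θ : ℕ → Tm) : Tm → Tm
  | var x => θ x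
  | lam x u => lam x (subst (Function.update θ x (var x)) u)
  | fn f us => fn f (us.attach.map fun ⟨u, hu⟩ => subst θ u)
  | mvar Z us => mvar Z (us.attach.map fun ⟨u, hu⟩ => subst θ u)
decreasing_by
  all_goals try have := List.sizeOf_lt_of_mem hu
  all_goals simp
  all_goals omega

end Tm
namespace Tm

/-- An `n`-ary substitute `λ̲(x⃗).w` is coded as the pair `(x⃗, w)`;
an IDTS-valuation assigns a substitute to every metavariable. -/
def Val : Type := ℕ → List ℕ × Tm

/-- The substitution `{x⃗ → t⃗}` built from parallel lists. -/
def listSubst (xs : List ℕ) (ts : List Tm) (y : ℕ) : Tm :=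
  if y ∈ xs then ts.getD (xs.idxOf y) (var y) else var y

/-- Application of an IDTS-valuation to a metaterm:
`Z(u⃗)σ = w{x⃗ → u⃗σ}` when `σ(Z) = λ̲(x⃗).w`. -/
def vapp (σ : Val) : Tm → Tm
  | var x => var x
  | lam x u => lam x (vapp σ u)
  | fn f us => fn f (us.attach.map fun ⟨u, hu⟩ => vapp σ u)
  | mvar Z us => ((σ Z).2).subst (listSubst (σ Z).1 (us.attach.map fun ⟨u, hu⟩ => vapp σ u))
decreasing_by
  all_goals try have := List.sizeOf_lt_of_mem hu
  all_goals simp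
  all_goals omega

/-- `FnReach t s`: `s` is a subterm of `t` reachable by passing only through
function-symbol nodes. -/
inductive FnReach : Tm → Tm → Prop
  | refl (t : Tm) : FnReach t t
  | step {f : ℕ} {us : List Tm} {t s : Tm} :
      t ∈ us → FnReach t s → FnReach (fn f us) s

/-- `Covered u v` (i.e. `v û⊴ u`): `v` is a covered-subterm of `u`; it is obtained by
replacing, under a context made only of abstractions, a subterm of `u` by one of its
subterms reachable through function-symbol nodes only. -/
inductive Covered : Tm → Tm → Prop
  | base {t s : Tm} : FnReach t s → Covered t s
  | abs {x : ℕ} {t s : Tm} : Covered t s → Covered (lam x t) (lam x s)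

/-- `u ▷̂ v`: `v` is a *strict* covered-subterm of `u`. -/
def StrictCovered (u v : Tm) : Prop := Covered u v ∧ u ≠ v

/-- Context closure of a root-step relation: the rewrite relation. -/
inductive Rw (root : Tm → Tm → Prop) : Tm → Tm → Prop
  | root {u v} : root u v → Rw root u v
  | abs {x u v} : Rw root u v → Rw root (lam x u) (lam x v)
  | fnArg {f l₁ l₂ u v} : Rw root u v →
      Rw root (fn f (l₁ ++ u :: l₂)) (fn f (l₁ ++ v :: l₂))
  | mvarArg {Z l₁ l₂ u v} : Rw root u v →
      Rw root (mvar Z (l₁ ++ u :: l₂)) (mvar Z (l₁ ++ v :: l₂))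

/-- Binary application via the application symbol `a`. -/
def appT (a : ℕ) (u v : Tm) : Tm := fn a [u, v]

/-- Iterated application `@(h, u₁, …, uₙ)`. -/
def appSpine (a : ℕ) (h : Tm) (us : List Tm) : Tm := us.foldl (appT a) h

/-- Accessible subterms of `v` (Definition "Accessible subterms"), relative to a set `C`
of constructors, an application symbol `a` and a predicate `basic` singling out the
terms of basic type. -/
inductive IAcc (C : ℕ → Prop) (a : ℕ) (basic : Tm → Prop) (v : Tm) : Tm → Prop
  | refl : IAcc C a basic v v
  | abs {x u} : IAcc C a basic v (lam x u) → IAcc C a basic v u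
  | constr {c us u} : C c → IAcc C a basic v (fn c us) → u ∈ us → IAcc C a basic v u
  | basicArg {f us u} : IAcc C a basic v (fn f us) → u ∈ us → basic u →
      IAcc C a basic v u
  | appL {u x} : IAcc C a basic v (appT a u (var x)) → x ∉ fv u → x ∉ fv v →
      IAcc C a basic v u
  | appR {x us u} : IAcc C a basic v (appSpine a (var x) us) →
      (∀ w ∈ us, x ∉ fv w) → x ∉ fv v → u ∈ us → IAcc C a basic v u

end Tm

/-!
A valuation acts homomorphically on abstractions and function symbols, which are the only
nodes a covered-subterm path crosses, so `Covered` is preserved. For strictness, a strict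
covered-subterm lies under at least one function symbol below the abstraction context; the
same holds after the valuation, so the image of the subterm is strictly smaller than that
of the term.
-/

namespace Tm

@[simp]
lemma vapp_lam (σ : Val) (x : ℕ) (t : Tm) : vapp σ (lam x t) = lam x (vapp σ t) := by
  rw [vapp]

@[simp]
lemma vapp_fn (σ : Val) (f : ℕ) (us : List Tm) :
    vapp σ (fn f us) = fn f (us.attach.map fun ⟨u, _⟩ => vapp σ u) := by
  rw [vapp]

lemma vapp_mem_attach_map {σ : Val} {t : Tm} {us : List Tm} (h : t ∈ us) :
    vapp σ t ∈ us.attach.map fun ⟨u, _⟩ => vapp σ u :=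
  List.mem_map.2 ⟨⟨t, h⟩, List.mem_attach _ _, rfl⟩

lemma sizeOf_lt_sizeOf_fn_of_mem {t : Tm} {f : ℕ} {us : List Tm} (h : t ∈ us) :
    sizeOf t < sizeOf (fn f us) := by
  have := List.sizeOf_lt_of_mem h
  simp only [fn.sizeOf_spec]
  omega

namespace FnReach

lemma sizeOf_le {t s : Tm} (h : FnReach t s) : sizeOf s ≤ sizeOf t := by
  induction h with
  | refl => exact le_rfl
  | step hmem _ ih => exact ih.trans (sizeOf_lt_sizeOf_fn_of_mem hmem).le

lemma vapp (σ : Val) {t s : Tm} (h : FnReach t s) : FnReach (vapp σ t) (vapp σ s) := by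
  induction h with
  | refl => exact refl _
  | step hmem _ ih =>
    rw [vapp_fn]
    exact step (vapp_mem_attach_map hmem) ih

lemma sizeOf_vapp_lt (σ : Val) {t s : Tm} (h : FnReach t s) (hne : t ≠ s) :
    sizeOf (Tm.vapp σ s) < sizeOf (Tm.vapp σ t) := by
  cases h with
  | refl => exact absurd rfl hne
  | step hmem hreach =>
    rw [vapp_fn]
    exact (hreach.vapp σ).sizeOf_le.trans_lt
      (sizeOf_lt_sizeOf_fn_of_mem (vapp_mem_attach_map hmem))

end FnReach

namespace Covered

lemma vapp (σ : Val) {u v : Tm} (h : Covered u v) : Covered (vapp σ u) (vapp σ v) := by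
  induction h with
  | base h => exact base (h.vapp σ)
  | abs _ ih =>
    simp only [vapp_lam]
    exact abs ih

lemma sizeOf_vapp_lt (σ : Val) {u v : Tm} (h : Covered u v) (hne : u ≠ v) :
    sizeOf (Tm.vapp σ v) < sizeOf (Tm.vapp σ u) := by
  induction h with
  | base h => exact h.sizeOf_vapp_lt σ hne
  | abs _ ih =>
    have := ih fun heq => hne (heq ▸ rfl)
    simp only [vapp_lam, lam.sizeOf_spec]
    omega

end Covered

end Tm

open Tm in
/-- the covered-subterm ordering is stable by valuation:
if `v` is a strict covered-subterm of `u` and `σ` is an IDTS-valuation,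
then `vσ` is a strict covered-subterm of `uσ`. -/
theorem strictCovered_stable_vapp :
    ∀ (u v : Tm) (σ : Val), StrictCovered u v →
      StrictCovered (vapp σ u) (vapp σ v) := by
  rintro u v σ ⟨hcov, hne⟩
  exact ⟨hcov.vapp σ, ne_of_apply_ne sizeOf (hcov.sizeOf_vapp_lt σ hne).ne'⟩
end

section
/- The covered-subterm relation commutes with rewriting: if u ▷̂ v (v is a strict covered-subterm of u) and v → w by a rewrite step of a rewrite system whose rules are headed by function symbols, then there exists v' such that u → v' and v' ▷̂ w. -/
set_option linter.unusedVariables false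

/-!
A covered-subterm is reached from the root through abstractions and then through
function-symbol nodes only. A rewrite step in the subterm therefore lifts to a step in the
function-symbol argument that contains it, keeping the reachability; and since rewrite rules
are headed by function symbols, a step below an abstraction context is a step under that
context. Strictness survives because the lifted term is strictly bigger than the subterm
it reaches.
-/

namespace Tm

variable {root : Tm → Tm → Prop}

theorem FnReach.sizeOf_le_s4 {t s : Tm} (h : FnReach t s) : sizeOf s ≤ sizeOf t := by
  induction h with
  | refl => exact le_rfl
  | step hmem _ ih =>
    have := List.sizeOf_lt_of_mem hmem
    simp only [fn.sizeOf_spec]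
    omega

theorem FnReach.fn_ne_of_mem {f : ℕ} {us : List Tm} {t s : Tm} (hmem : t ∈ us)
    (h : FnReach t s) : fn f us ≠ s := by
  rintro rfl
  have := List.sizeOf_lt_of_mem hmem
  have := h.sizeOf_le_s4
  simp only [fn.sizeOf_spec] at this
  omega

theorem FnReach.exists_rw {t s s' : Tm} (h : FnReach t s) (hs : Rw root s s') :
    ∃ t', Rw root t t' ∧ FnReach t' s' := by
  induction h with
  | refl => exact ⟨s', hs, .refl _⟩
  | step hmem _ ih =>
    obtain ⟨m', hm', hreach⟩ := ih hs
    obtain ⟨l₁, l₂, rfl⟩ := List.append_of_mem hmem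
    exact ⟨_, .fnArg hm', .step (by simp) hreach⟩

theorem FnReach.exists_rw_of_ne {t s s' : Tm} (h : FnReach t s) (hne : t ≠ s)
    (hs : Rw root s s') : ∃ t', Rw root t t' ∧ FnReach t' s' ∧ t' ≠ s' := by
  cases h with
  | refl => exact absurd rfl hne
  | step hmem hm =>
    obtain ⟨m', hm', hreach⟩ := hm.exists_rw hs
    obtain ⟨l₁, l₂, rfl⟩ := List.append_of_mem hmem
    have hmem' : m' ∈ l₁ ++ m' :: l₂ := by simp
    exact ⟨_, .fnArg hm', .step hmem' hreach, hreach.fn_ne_of_mem hmem'⟩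

theorem Rw.exists_of_lam (hroot : ∀ u v, root u v → ∃ f us, u = fn f us) {x : ℕ}
    {t w : Tm} (h : Rw root (lam x t) w) : ∃ t', w = lam x t' ∧ Rw root t t' := by
  cases h with
  | root hr =>
    obtain ⟨_, _, h⟩ := hroot _ _ hr
    cases h
  | abs h => exact ⟨_, rfl, h⟩

end Tm

open Tm in
/-- the covered-subterm relation commutes with rewriting for rewrite
systems all of whose root steps are headed by function symbols: if `u ▷̂ v` and
`v → w`, then there is `v'` with `u → v'` and `v' ▷̂ w`. -/
theorem strictCovered_commutes_rw
    (root : Tm → Tm → Prop)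
    (hroot : ∀ u v, root u v → ∃ f us, u = Tm.fn f us) :
    ∀ u v w : Tm, StrictCovered u v → Rw root v w →
      ∃ v', Rw root u v' ∧ StrictCovered v' w := by
  rintro u v w ⟨hcov, hne⟩ hrw
  induction hcov generalizing w with
  | base hreach =>
    obtain ⟨t', ht', hreach', hne'⟩ := hreach.exists_rw_of_ne hne hrw
    exact ⟨t', ht', .base hreach', hne'⟩
  | @abs x t s _ ih =>
    obtain ⟨s', rfl, hs'⟩ := hrw.exists_of_lam hroot
    obtain ⟨t', ht', hcov', hne'⟩ := ih s' (fun h => hne (h ▸ rfl)) hs'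
    exact ⟨lam x t', .abs ht', .abs hcov', fun h => hne' (lam.inj h).2⟩
end
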